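/- arXiv:1512.03315 — 4 statements merged into one kernel-verified Lean document; each statement's English description precedes it below -/
import Mathlib

section
/- Let z ∈ [0, 1/24), x* a probability distribution over rows of a matrix R with entries in [0,1], and j* a column. Define S = {i ∈ supp(x*) : R_{i,j*} < 1/3 + z} and B = supp(x*) \ S, and let x_B be x* restricted to B and renormalized. If sum_i x*_i R_{i,j*} > 2/3 − z, Pr(S) ≤ (1+3z)/(2−3z), and Pr(B) ≤ (1+3z)/(2−3z), then sum_i (x_B)_i R_{i,j*} > (1−6z)/(1+3z). -/
theorem stmt_5 (n : ℕ) (R : Matrix (Fin n) (Fin n) ℝ) (x : Fin n → ℝ)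
    (jstar : Fin n) (z : ℝ) (hz : 0 ≤ z ∧ z < 1/24)
    (hR : ∀ i j, R i j ∈ Set.Icc (0:ℝ) 1)
    (hx0 : ∀ i, 0 ≤ x i) (hx1 : ∑ i, x i = 1)
    (S : Finset (Fin n)) (B : Finset (Fin n))
    (hS : S = Finset.univ.filter (fun i => x i > 0 ∧ R i jstar < 1/3 + z))
    (hBdef : B = Finset.univ.filter (fun i => x i > 0 ∧ ¬ R i jstar < 1/3 + z))
    (xB : Fin n → ℝ)
    (hxB : ∀ i, xB i = if i ∈ B then x i / (∑ i' ∈ B, x i') else 0)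
    (hBpos : 0 < ∑ i' ∈ B, x i')
    (hRsum : ∑ i, x i * R i jstar > 2/3 - z)
    (hPrS : ∑ i ∈ S, x i ≤ (1 + 3*z) / (2 - 3*z))
    (hPrB : ∑ i ∈ B, x i ≤ (1 + 3*z) / (2 - 3*z)) :
    ∑ i, xB i * R i jstar > (1 - 6*z) / (1 + 3*z) := by
  classical
  obtain ⟨hz0, hz1⟩ := hz
  set P : ℝ := ∑ i' ∈ B, x i' with hP
  set N : ℝ := ∑ i ∈ B, x i * R i jstar with hN
  set SS : ℝ := ∑ i ∈ S, x i * R i jstar with hSS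
  have hD : (0:ℝ) < 2 - 3*z := by linarith
  have hA : (0:ℝ) < 1 + 3*z := by linarith
  -- split the total sum
  have hsplit : ∑ i, x i * R i jstar = SS + N := by
    rw [hSS, hN, hS, hBdef]
    rw [← Finset.sum_filter_add_sum_filter_not Finset.univ
      (fun i => x i > 0 ∧ R i jstar < 1/3 + z) (fun i => x i * R i jstar)]
    congr 1
    have : (Finset.univ.filter (fun i => x i > 0 ∧ ¬ R i jstar < 1/3 + z))
        = (Finset.univ.filter (fun i => ¬(x i > 0 ∧ R i jstar < 1/3 + z))).filter
            (fun i => x i > 0) := by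
      ext i
      simp only [Finset.mem_filter, Finset.mem_univ, true_and]
      tauto
    rw [this]
    rw [← Finset.sum_filter_add_sum_filter_not
      (Finset.univ.filter (fun i => ¬(x i > 0 ∧ R i jstar < 1/3 + z)))
      (fun i => x i > 0) (fun i => x i * R i jstar)]
    have hz0' : ∀ i ∈ (Finset.univ.filter (fun i => ¬(x i > 0 ∧ R i jstar < 1/3 + z))).filter
        (fun i => ¬ x i > 0), x i * R i jstar = 0 := by
      intro i hi
      simp only [Finset.mem_filter] at hi
      have : x i = 0 := le_antisymm (not_lt.mp hi.2) (hx0 i)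
      simp [this]
    rw [Finset.sum_eq_zero hz0', add_zero]
  -- bound on SS
  have hSle : SS ≤ (1/3 + z) * ∑ i ∈ S, x i := by
    rw [hSS, Finset.mul_sum]
    apply Finset.sum_le_sum
    intro i hi
    rw [hS] at hi
    simp only [Finset.mem_filter, Finset.mem_univ, true_and] at hi
    have := hx0 i
    nlinarith [hi.2, hi.1]
  have hPrS' : (∑ i ∈ S, x i) * (2 - 3*z) ≤ 1 + 3*z := by
    rw [← le_div_iff₀ hD]; exact hPrS
  have hPrB' : P * (2 - 3*z) ≤ 1 + 3*z := by
    rw [← le_div_iff₀ hD]; exact hPrB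
  have hSle2 : SS * (2 - 3*z) ≤ (1/3 + z) * (1 + 3*z) := by
    have hSnn : 0 ≤ ∑ i ∈ S, x i := Finset.sum_nonneg fun i _ => hx0 i
    nlinarith [hSle, hPrS', hD]
  have hNlow : N * (2 - 3*z) > 1 - 6*z := by
    have : SS + N > 2/3 - z := hsplit ▸ hRsum
    nlinarith [hSle2]
  have hNpos : 0 < N := by nlinarith
  -- rewrite goal sum
  have hgoal : ∑ i, xB i * R i jstar = N / P := by
    rw [hN, Finset.sum_div]
    rw [← Finset.sum_subset B.subset_univ (fun i _ hi => by rw [hxB i, if_neg hi, zero_mul])]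
    apply Finset.sum_congr rfl
    intro i hi
    rw [hxB i, if_pos hi, div_mul_eq_mul_div]
  rw [hgoal, gt_iff_lt, div_lt_div_iff₀ hA hBpos]
  nlinarith [mul_le_mul_of_nonneg_left hPrB' hNpos.le,
    mul_lt_mul_of_pos_right hNlow hBpos]
end

section
/- Let z ∈ [0, 1/24), x_B a probability distribution over rows, and j' a column of matrices R, C with entries in [0,1]. Suppose x_B assigns at most p = 9z/((1+3z)(2/3−z)) probability to rows i with C_{i,j'} < 1/3 + z, and suppose every row i in supp(x_B) with C_{i,j'} ≥ 1/3 + z satisfies R_{i,j'} < 1/3 + z. Then sum_i (x_B)_i R_{i,j'} < (1/3)·(1 + 33z + 9z²)/(1 + 3z). -/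
theorem stmt_7 (n : ℕ) (R C : Matrix (Fin n) (Fin n) ℝ) (xB : Fin n → ℝ)
    (j' : Fin n) (z : ℝ) (hz : 0 ≤ z ∧ z < 1/24)
    (hR : ∀ i j, R i j ∈ Set.Icc (0:ℝ) 1)
    (hCm : ∀ i j, C i j ∈ Set.Icc (0:ℝ) 1)
    (hx0 : ∀ i, 0 ≤ xB i) (hx1 : ∑ i, xB i = 1)
    (hp : ∑ i ∈ Finset.univ.filter (fun i => C i j' < 1/3 + z), xB i
      ≤ 9*z / ((1 + 3*z) * (2/3 - z)))
    (hsupp : ∀ i, xB i > 0 → C i j' ≥ 1/3 + z → R i j' < 1/3 + z) :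
    ∑ i, xB i * R i j' < (1/3) * (1 + 33*z + 9*z^2) / (1 + 3*z) := by
  obtain ⟨hz0, hz1⟩ := hz
  set S := Finset.univ.filter (fun i => C i j' < 1/3 + z) with hS
  have hden : (0:ℝ) < (1 + 3*z) * (2/3 - z) := by nlinarith
  have hp1 : 9*z / ((1 + 3*z) * (2/3 - z)) < 1 := by
    rw [div_lt_one hden]; nlinarith
  have hsplit : ∑ i ∈ S, xB i + ∑ i ∈ Sᶜ, xB i = 1 := by
    rw [Finset.sum_add_sum_compl]; exact hx1
  have hposc : 0 < ∑ i ∈ Sᶜ, xB i := by linarith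
  have hex : ∃ i ∈ Sᶜ, 0 < xB i := by
    by_contra h
    push_neg at h
    have : ∑ i ∈ Sᶜ, xB i = 0 :=
      Finset.sum_eq_zero fun i hi => le_antisymm (h i hi) (hx0 i)
    linarith
  obtain ⟨i0, hi0, hi0pos⟩ := hex
  have hRbig : ∀ i ∈ Sᶜ, xB i * R i j' ≤ xB i * (1/3 + z) := by
    intro i hi
    rcases lt_or_eq_of_le (hx0 i) with hpos | heq
    · have hC : C i j' ≥ 1/3 + z := by
        simp only [hS, Finset.mem_compl, Finset.mem_filter, Finset.mem_univ,
          true_and, not_lt] at hi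
        exact hi
      exact mul_le_mul_of_nonneg_left (le_of_lt (hsupp i hpos hC)) (le_of_lt hpos)
    · simp [← heq]
  have hsum1 : ∑ i ∈ S, xB i * R i j' ≤ ∑ i ∈ S, xB i :=
    Finset.sum_le_sum fun i _ =>
      mul_le_of_le_one_right (hx0 i) (hR i j').2
  have hsum2 : ∑ i ∈ Sᶜ, xB i * R i j' < ∑ i ∈ Sᶜ, xB i * (1/3 + z) := by
    apply Finset.sum_lt_sum hRbig
    refine ⟨i0, hi0, ?_⟩
    have hC : C i0 j' ≥ 1/3 + z := by
      simp only [hS, Finset.mem_compl, Finset.mem_filter, Finset.mem_univ,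
        true_and, not_lt] at hi0
      exact hi0
    exact mul_lt_mul_of_pos_left (hsupp i0 hi0pos hC) hi0pos
  have htot : ∑ i, xB i * R i j' = ∑ i ∈ S, xB i * R i j' + ∑ i ∈ Sᶜ, xB i * R i j' :=
    (Finset.sum_add_sum_compl S _).symm
  have hcomp : ∑ i ∈ Sᶜ, xB i * (1/3 + z) = (1 - ∑ i ∈ S, xB i) * (1/3 + z) := by
    rw [← Finset.sum_mul]; congr 1; linarith
  have key : ∑ i, xB i * R i j' < ∑ i ∈ S, xB i + (1 - ∑ i ∈ S, xB i) * (1/3 + z) := by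
    rw [htot, ← hcomp]; linarith
  set a := ∑ i ∈ S, xB i with ha
  have hmul : a * ((1 + 3*z) * (2/3 - z)) ≤ 9*z := by
    rw [← le_div_iff₀ hden]; exact hp
  have hd2 : (0:ℝ) < 1 + 3*z := by linarith
  calc ∑ i, xB i * R i j' < a + (1 - a) * (1/3 + z) := key
    _ ≤ (1/3) * (1 + 33*z + 9*z^2) / (1 + 3*z) := by
        rw [le_div_iff₀ hd2]; nlinarith
end

section
/- Let (R,C) be a bimatrix game with payoffs in [0,1]. Let x* be a row-player strategy securing value v_r against every column (i.e., (x*^T R)_j ≥ v_r for all j), let j be a best-response column against x*, let r be a best-response row against column j, and define x' = (1/(2−v_r))·x* + ((1−v_r)/(2−v_r))·e_r. Then the row player's regret under (x', e_j), namely max_i (R e_j)_i − x'^T R e_j, is at most (1−v_r)/(2−v_r). -/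
theorem stmt_12 (n : ℕ) (R C : Matrix (Fin n) (Fin n) ℝ)
    (xstar : Fin n → ℝ) (vr : ℝ) (j r : Fin n)
    (hR : ∀ i j', R i j' ∈ Set.Icc (0:ℝ) 1)
    (hCm : ∀ i j', C i j' ∈ Set.Icc (0:ℝ) 1)
    (hx0 : ∀ i, 0 ≤ xstar i) (hx1 : ∑ i, xstar i = 1)
    (hv : 0 ≤ vr ∧ vr ≤ 1)
    (hsecure : ∀ j'', ∑ i, xstar i * R i j'' ≥ vr)
    (hjBR : ∀ j'', ∑ i, xstar i * C i j'' ≤ ∑ i, xstar i * C i j)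
    (hrBR : ∀ i, R i j ≤ R r j)
    (x' : Fin n → ℝ)
    (hx' : ∀ i, x' i = (1/(2 - vr)) * xstar i
      + ((1 - vr)/(2 - vr)) * (if i = r then 1 else 0)) :
    ∀ i, R i j - (∑ i', x' i' * R i' j) ≤ (1 - vr)/(2 - vr) := by
  intro i
  have h2 : (0:ℝ) < 2 - vr := by linarith [hv.2]
  have hsum : ∑ i', x' i' * R i' j
      = (1/(2-vr)) * (∑ i', xstar i' * R i' j) + ((1-vr)/(2-vr)) * R r j := by
    simp only [hx', add_mul, Finset.sum_add_distrib, Finset.mul_sum, ite_mul, one_mul,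
      zero_mul, mul_ite, mul_one, mul_zero, Finset.sum_ite_eq', Finset.mem_univ, if_true,
      mul_assoc]
  rw [hsum]
  have hs := hsecure j
  have hrj1 := (hR r j).2
  have hij := hrBR i
  have key : R i j - ((1/(2-vr)) * (∑ i', xstar i' * R i' j) + ((1-vr)/(2-vr)) * R r j)
      ≤ (1/(2-vr)) * R r j - (1/(2-vr)) * vr := by
    have h1 : (1/(2-vr)) * vr ≤ (1/(2-vr)) * (∑ i', xstar i' * R i' j) := by
      apply mul_le_mul_of_nonneg_left hs.le (by positivity)
    have h2' : R i j = (1/(2-vr)) * R i j + ((1-vr)/(2-vr)) * R i j := by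
      field_simp; ring
    have h3 : (1/(2-vr)) * R i j ≤ (1/(2-vr)) * R r j :=
      mul_le_mul_of_nonneg_left hij (by positivity)
    have h4 : ((1-vr)/(2-vr)) * R i j ≤ ((1-vr)/(2-vr)) * R r j :=
      mul_le_mul_of_nonneg_left hij (div_nonneg (by linarith [hv.2]) h2.le)
    linarith
  have last : (1/(2-vr)) * R r j - (1/(2-vr)) * vr ≤ (1 - vr)/(2 - vr) := by
    rw [div_eq_mul_inv (1-vr), mul_comm (1-vr)]
    have : (1/(2-vr)) * R r j - (1/(2-vr)) * vr ≤ (1/(2-vr)) * 1 - (1/(2-vr)) * vr := by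
      have := mul_le_mul_of_nonneg_left hrj1 (le_of_lt (by positivity : (0:ℝ) < 1/(2-vr)))
      linarith
    calc _ ≤ (1/(2-vr)) * 1 - (1/(2-vr)) * vr := this
      _ = (2-vr)⁻¹ * (1 - vr) := by ring
  linarith
end

section
/- Let (R,C) be a bimatrix game with payoffs in [0,1]. Let x* be any row-player strategy, j a best-response column against x* (maximizing (x*^T C)_j), r any row, and x' = (1/(2−v))·x* + ((1−v)/(2−v))·e_r for some v ∈ [0,1]. Then the column player's regret under (x', e_j), namely max_c (x'^T C)_c − (x'^T C)_j, is at most (1−v)/(2−v). -/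
theorem stmt_13 (n : ℕ) (R C : Matrix (Fin n) (Fin n) ℝ)
    (xstar : Fin n → ℝ) (v : ℝ) (j r : Fin n)
    (hCm : ∀ i j', C i j' ∈ Set.Icc (0:ℝ) 1)
    (hx0 : ∀ i, 0 ≤ xstar i) (hx1 : ∑ i, xstar i = 1)
    (hv : 0 ≤ v ∧ v ≤ 1)
    (hjBR : ∀ j'', ∑ i, xstar i * C i j'' ≤ ∑ i, xstar i * C i j)
    (x' : Fin n → ℝ)
    (hx' : ∀ i, x' i = (1/(2 - v)) * xstar i
      + ((1 - v)/(2 - v)) * (if i = r then 1 else 0)) :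
    ∀ c, (∑ i, x' i * C i c) - (∑ i, x' i * C i j) ≤ (1 - v)/(2 - v) := by
  intro c
  have h2v : (0:ℝ) < 2 - v := by linarith [hv.2]
  have ha : (0:ℝ) ≤ 1/(2 - v) := by positivity
  have hb : (0:ℝ) ≤ (1 - v)/(2 - v) := by
    apply div_nonneg <;> linarith [hv.1, hv.2]
  have hsum : ∀ d : Fin n, (∑ i, x' i * C i d)
      = (1/(2 - v)) * (∑ i, xstar i * C i d) + ((1 - v)/(2 - v)) * C r d := by
    intro d
    simp only [hx', add_mul, Finset.sum_add_distrib, Finset.mul_sum, mul_assoc]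
    congr 1
    rw [Finset.sum_eq_single r]
    · simp
    · intro b _ hb'; simp [hb']
    · simp
  rw [hsum c, hsum j]
  have h1 : (1/(2 - v)) * (∑ i, xstar i * C i c) ≤ (1/(2 - v)) * (∑ i, xstar i * C i j) :=
    mul_le_mul_of_nonneg_left (hjBR c) ha
  have h2 : C r c ≤ 1 := (hCm r c).2
  have h3 : 0 ≤ C r j := (hCm r j).1
  nlinarith [mul_le_mul_of_nonneg_left h2 hb, mul_le_mul_of_nonneg_left h3 hb]
end
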